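/- Let A ∈ ℝ^{n_o × n_o} be a symmetric matrix with nonnegative entries whose row sums are strictly positive, and let D be the diagonal matrix with D_{ii} = ∑_j A_{ij}. Let Z ∈ {0,1}^{n_o × n_c} be a cluster-indicator matrix (each entry 0 or 1, each row sums to 1, each column contains at least one 1), inducing the partition O_1, …, O_{n_c} of the index set O = {1, …, n_o} with O_c = {i : z_{ic} = 1}. Let V := Z (Zᵀ D Z)^{−1/2}. Then ∑_{c=1}^{n_c} normCut(O_c, O ∖ O_c) = n_c − Tr(Vᵀ A V), where normCut(O₁, O₂) := (∑_{i ∈ O₁, j ∈ O₂} A_{ij}) / (∑_{i ∈ O₁, j ∈ O} A_{ij}). Consequently, minimizing the average normalized cut (1/n_c) ∑_c normCut(O_c, O ∖ O_c) over partitions is equivalent to maximizing (1/n_c) Tr(Vᵀ A V). -/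

import Mathlib

/-!
For a 0/1 column `z` of `Z` with support `O_c`, `zᵀ A z` is the weight inside `O_c` and
`zᵀ D z` is the volume of `O_c` (its total weight to `O`). Since `V` rescales each column by
`vol(O_c)^{-1/2}`, the trace of `Vᵀ A V` is `∑_c inner(O_c) / vol(O_c)`, while the cut from
`O_c` to its complement is `vol(O_c) - inner(O_c)`, so each normalized cut is
`1 - inner(O_c) / vol(O_c)`.
-/

open Matrix Finset

namespace Matrix

variable {ι κ R : Type*} [Fintype ι]

theorem transpose_mul_mul_self_apply_of_zero_one [CommSemiring R] [DecidableEq R]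
    (Z : Matrix ι κ R) (M : Matrix ι ι R) (c : κ) (hZ : ∀ i, Z i c = 0 ∨ Z i c = 1) :
    (Zᵀ * M * Z) c c =
      ∑ i ∈ univ.filter (Z · c = 1), ∑ j ∈ univ.filter (Z · c = 1), M i j := by
  simp only [mul_apply, transpose_apply, sum_mul, sum_filter]
  rw [sum_comm]
  refine sum_congr rfl fun i _ => ?_
  rcases hZ i with hi | hi
  · simpa [hi] using fun h => (eq_zero_of_zero_eq_one h _).symm
  · simp only [hi, if_true, one_mul]
    refine sum_congr rfl fun j _ => ?_
    rcases hZ j with hj | hj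
    · simpa [hj] using fun h => (eq_zero_of_zero_eq_one h _).symm
    · simp [hj]

theorem transpose_mul_diagonal_mul_self_apply_of_zero_one [CommSemiring R] [DecidableEq R]
    [DecidableEq ι] (Z : Matrix ι κ R) (d : ι → R) (c : κ)
    (hZ : ∀ i, Z i c = 0 ∨ Z i c = 1) :
    (Zᵀ * diagonal d * Z) c c = ∑ i ∈ univ.filter (Z · c = 1), d i := by
  rw [transpose_mul_mul_self_apply_of_zero_one Z _ c hZ]
  refine sum_congr rfl fun i hi => ?_
  simp [diagonal_apply, hi]

theorem trace_transpose_mul_mul_of_mul_diagonal [Fintype κ] [DecidableEq κ] [CommSemiring R]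
    (Z : Matrix ι κ R) (M : Matrix ι ι R) (w : κ → R) :
    ((Z * diagonal w)ᵀ * M * (Z * diagonal w)).trace = ∑ c, w c * w c * (Zᵀ * M * Z) c c := by
  have hassoc :
      (Z * diagonal w)ᵀ * M * (Z * diagonal w) = diagonal w * (Zᵀ * M * Z) * diagonal w := by
    simp only [transpose_mul, diagonal_transpose, Matrix.mul_assoc]
  rw [hassoc, trace]
  refine sum_congr rfl fun c _ => ?_
  simp only [diag_apply, mul_diagonal, diagonal_mul]
  ring

end Matrix

theorem Finset.sum_sum_sdiff_div_eq_one_sub {ι K : Type*} [Fintype ι] [DecidableEq ι] [Field K]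
    (A : ι → ι → K) (s : Finset ι) (hs : ∑ i ∈ s, ∑ j, A i j ≠ 0) :
    (∑ i ∈ s, ∑ j ∈ univ \ s, A i j) / (∑ i ∈ s, ∑ j, A i j)
      = 1 - (∑ i ∈ s, ∑ j ∈ s, A i j) / (∑ i ∈ s, ∑ j, A i j) := by
  have hsplit : ∑ i ∈ s, ∑ j ∈ univ \ s, A i j
      = ∑ i ∈ s, ∑ j, A i j - ∑ i ∈ s, ∑ j ∈ s, A i j := by
    rw [← sum_sub_distrib]
    exact sum_congr rfl fun i _ => sum_sdiff_eq_sub (subset_univ s)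
  rw [hsplit, sub_div, div_self hs]

theorem normalized_cut_trace_identity_general
    (n_o n_c : ℕ) (hnc : 1 ≤ n_c)
    (A : Matrix (Fin n_o) (Fin n_o) ℝ)
    (hdeg : ∀ i, 0 < ∑ j, A i j)
    (Z : Matrix (Fin n_o) (Fin n_c) ℝ)
    (hZ01 : ∀ i c, Z i c = 0 ∨ Z i c = 1)
    (hcol : ∀ c, ∃ i, Z i c = 1)
    (O : Fin n_c → Finset (Fin n_o))
    (hO : ∀ c, O c = Finset.univ.filter (fun i => Z i c = 1))
    (normCut : Finset (Fin n_o) → Finset (Fin n_o) → ℝ)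
    (hcut : ∀ O₁ O₂ : Finset (Fin n_o), normCut O₁ O₂ =
        (∑ i ∈ O₁, ∑ j ∈ O₂, A i j) / (∑ i ∈ O₁, ∑ j, A i j))
    (D : Matrix (Fin n_o) (Fin n_o) ℝ)
    (hD : D = Matrix.diagonal fun i => ∑ j, A i j)
    (V : Matrix (Fin n_o) (Fin n_c) ℝ)
    (hV : V = Z * Matrix.diagonal fun c => (Real.sqrt ((Zᵀ * D * Z) c c))⁻¹) :
    (∑ c, normCut (O c) (Finset.univ \ O c) = n_c - (Vᵀ * A * V).trace) ∧
    ((1 / (n_c : ℝ)) * ∑ c, normCut (O c) (Finset.univ \ O c)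
        = 1 - (1 / (n_c : ℝ)) * (Vᵀ * A * V).trace) := by
  have hvol : ∀ c, (Zᵀ * D * Z) c c = ∑ i ∈ O c, ∑ j, A i j := fun c => by
    rw [hD, transpose_mul_diagonal_mul_self_apply_of_zero_one Z _ c (hZ01 · c), hO]
  have hvol_pos : ∀ c, 0 < (Zᵀ * D * Z) c c := fun c => by
    obtain ⟨i, hi⟩ := hcol c
    rw [hvol]
    exact sum_pos (fun j _ => hdeg j) ⟨i, by simp [hO, hi]⟩
  have hinner : ∀ c, (Zᵀ * A * Z) c c = ∑ i ∈ O c, ∑ j ∈ O c, A i j := fun c => by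
    rw [transpose_mul_mul_self_apply_of_zero_one Z A c (hZ01 · c), hO]
  have htrace : (Vᵀ * A * V).trace = ∑ c, (Zᵀ * A * Z) c c / (Zᵀ * D * Z) c c := by
    rw [hV, trace_transpose_mul_mul_of_mul_diagonal]
    refine sum_congr rfl fun c _ => ?_
    rw [← mul_inv, Real.mul_self_sqrt (hvol_pos c).le, inv_mul_eq_div]
  have hcut_c : ∀ c, normCut (O c) (univ \ O c) = 1 - (Zᵀ * A * Z) c c / (Zᵀ * D * Z) c c :=
    fun c => by
      rw [hcut, hinner, hvol]
      exact sum_sum_sdiff_div_eq_one_sub A (O c) (hvol c ▸ (hvol_pos c).ne')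
  have hsum : ∑ c, normCut (O c) (univ \ O c) = n_c - (Vᵀ * A * V).trace := by
    simp only [hcut_c, sum_sub_distrib, htrace, sum_const, card_univ, Fintype.card_fin,
      nsmul_eq_mul, mul_one]
  refine ⟨hsum, ?_⟩
  have hnc_ne : (n_c : ℝ) ≠ 0 := by positivity
  rw [hsum]
  field_simp

/-- For a nonnegative symmetric affinity matrix `A` with positive row sums and a
cluster-indicator matrix `Z` inducing the partition `O_1, …, O_{n_c}`, the sum of
normalized cuts equals `n_c − Tr(Vᵀ A V)` with `V = Z (Zᵀ D Z)^{−1/2}`; consequently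
the average normalized cut is `1 − (1/n_c) Tr(Vᵀ A V)`. -/
theorem normalized_cut_trace_identity
    (n_o n_c : ℕ) (hnc : 1 ≤ n_c)
    (A : Matrix (Fin n_o) (Fin n_o) ℝ) (hAsym : A.IsSymm)
    (hAnn : ∀ i j, 0 ≤ A i j) (hdeg : ∀ i, 0 < ∑ j, A i j)
    (Z : Matrix (Fin n_o) (Fin n_c) ℝ)
    (hZ01 : ∀ i c, Z i c = 0 ∨ Z i c = 1)
    (hrow : ∀ i, ∑ c, Z i c = 1)
    (hcol : ∀ c, ∃ i, Z i c = 1)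
    (O : Fin n_c → Finset (Fin n_o))
    (hO : ∀ c, O c = Finset.univ.filter (fun i => Z i c = 1))
    (normCut : Finset (Fin n_o) → Finset (Fin n_o) → ℝ)
    (hcut : ∀ O₁ O₂ : Finset (Fin n_o), normCut O₁ O₂ =
        (∑ i ∈ O₁, ∑ j ∈ O₂, A i j) / (∑ i ∈ O₁, ∑ j, A i j))
    (D : Matrix (Fin n_o) (Fin n_o) ℝ)
    (hD : D = Matrix.diagonal fun i => ∑ j, A i j)
    (V : Matrix (Fin n_o) (Fin n_c) ℝ)
    (hV : V = Z * Matrix.diagonal fun c => (Real.sqrt ((Zᵀ * D * Z) c c))⁻¹) :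
    (∑ c, normCut (O c) (Finset.univ \ O c) = n_c - (Vᵀ * A * V).trace) ∧
    ((1 / (n_c : ℝ)) * ∑ c, normCut (O c) (Finset.univ \ O c)
        = 1 - (1 / (n_c : ℝ)) * (Vᵀ * A * V).trace) :=
  normalized_cut_trace_identity_general n_o n_c hnc A hdeg Z hZ01 hcol O hO normCut hcut D hD V hV
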